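/- arXiv:1612.02683 — 2 statements merged into one kernel-verified Lean document; each statement's English description precedes it below -/
import Mathlib

section
/- Let σ₁, σ₂ ∈ ℚ_p and let C^{σᵢ} = {t | α < ord(t−σᵢ) < β ∧ ac_m(t−σᵢ) = ac_m(λ)} with λ ≠ 0. If ord(σ₁ − σ₂) ≤ α, then C^{σ₁} ∩ C^{σ₂} = ∅. -/
open scoped Classical

namespace PaperCD

variable (p : ℕ) [hp : Fact p.Prime]

/-- The unit part of a nonzero `p`-adic number: `x * p^(-ord x)`, an element of `ℤ_[p]`
of norm one; `0` is sent to `0`. -/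
noncomputable def unitPart (x : ℚ_[p]) : ℤ_[p] :=
  if h : x = 0 then 0 else
    ⟨x * (p : ℚ_[p]) ^ (-x.valuation), by
      have hp0 : (p : ℝ) ≠ 0 := by exact_mod_cast hp.out.ne_zero
      have hx : ‖x * (p : ℚ_[p]) ^ (-x.valuation)‖ = 1 := by
        rw [norm_mul, Padic.norm_p_zpow, Padic.norm_eq_zpow_neg_valuation h, neg_neg,
          ← zpow_add₀ hp0]
        simp
      exact le_of_eq hx⟩

/-- The angular component map of level `m`: `ac_m(x) = x·p^(-ord x) mod p^m`,
with `ac m 0 = 0`. -/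
noncomputable def ac (m : ℕ) (x : ℚ_[p]) : ZMod (p ^ m) :=
  PadicInt.toZModPow m (unitPart p x)

/-- The closed ball of (valuative) radius `γ` around `a` in `ℚ_[p]`:
`{t | ord (t - a) ≥ γ}`. -/
def pball (γ : ℤ) (a : ℚ_[p]) : Set ℚ_[p] := {t | ‖t - a‖ ≤ (p : ℝ) ^ (-γ)}

end PaperCD

open PaperCD

namespace Padic

variable {p : ℕ} [Fact p.Prime]

theorem valuation_neg (x : ℚ_[p]) : (-x).valuation = x.valuation := by
  rcases eq_or_ne x 0 with rfl | hx
  · simp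
  have hnorm : (p : ℝ) ^ (-(-x).valuation) = (p : ℝ) ^ (-x.valuation) := by
    rw [← norm_eq_zpow_neg_valuation (neg_ne_zero.mpr hx), ← norm_eq_zpow_neg_valuation hx,
      norm_neg]
  have hp : (1 : ℝ) < p := by exact_mod_cast (Fact.out : p.Prime).one_lt
  simpa using zpow_right_injective₀ (by positivity) hp.ne' hnorm

theorem min_le_valuation_sub {x y : ℚ_[p]} (hxy : x - y ≠ 0) :
    min x.valuation y.valuation ≤ (x - y).valuation := by
  rw [sub_eq_add_neg] at hxy ⊢
  simpa only [valuation_neg] using le_valuation_add hxy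

end Padic

theorem cells_disjoint_of_branching_below_general (p m : ℕ) [Fact p.Prime]
    (α β : ℤ) (σ₁ σ₂ lam : ℚ_[p])
    (hne : σ₁ ≠ σ₂) (hbr : (σ₁ - σ₂).valuation ≤ α) :
    {t : ℚ_[p] | t ≠ σ₁ ∧ α < (t - σ₁).valuation ∧ (t - σ₁).valuation < β ∧
        ac p m (t - σ₁) = ac p m lam} ∩
      {t : ℚ_[p] | t ≠ σ₂ ∧ α < (t - σ₂).valuation ∧ (t - σ₂).valuation < β ∧
        ac p m (t - σ₂) = ac p m lam} = ∅ := by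
  refine Set.eq_empty_of_forall_notMem fun t ⟨⟨_, h₁, _⟩, ⟨_, h₂, _⟩⟩ => ?_
  have hdiff : (t - σ₂) - (t - σ₁) = σ₁ - σ₂ := by ring
  have hmin := Padic.min_le_valuation_sub (x := t - σ₂) (y := t - σ₁)
    (by rw [hdiff]; exact sub_ne_zero.mpr hne)
  rw [hdiff] at hmin
  exact hbr.not_gt (lt_of_lt_of_le (lt_min h₂ h₁) hmin)

theorem cells_disjoint_of_branching_below (p m : ℕ) [Fact p.Prime] (hm : 1 ≤ m)
    (α β : ℤ) (σ₁ σ₂ lam : ℚ_[p]) (hlam : lam ≠ 0)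
    (hne : σ₁ ≠ σ₂) (hbr : (σ₁ - σ₂).valuation ≤ α) :
    {t : ℚ_[p] | t ≠ σ₁ ∧ α < (t - σ₁).valuation ∧ (t - σ₁).valuation < β ∧
        ac p m (t - σ₁) = ac p m lam} ∩
      {t : ℚ_[p] | t ≠ σ₂ ∧ α < (t - σ₂).valuation ∧ (t - σ₂).valuation < β ∧
        ac p m (t - σ₂) = ac p m lam} = ∅ :=
  cells_disjoint_of_branching_below_general p m α β σ₁ σ₂ lam hne hbr
end

section
/- Let Z ⊆ ℚ_p be a set which is a union of infinitely many pairwise disjoint closed balls of a common radius δ ∈ ℤ, each maximal with respect to inclusion in Z. Then Z is not a finite union of sets of the form {t | α ◻₁ ord(t−c) ◻₂ β ∧ t−c ∈ λ·Q_{n,m}} (semi-algebraic cells). Equivalently: a finite union of such cells contains only finitely many maximal balls of any fixed radius δ, unless it contains a ball of radius < δ around one of them. -/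
open scoped Classical

open PaperCD

/-- `x ∈ lam · Q_{n,m}`: for `lam = 0` this means `x = 0`; for `lam ≠ 0` it means
`x ≠ 0`, `ord x ≡ ord lam mod n` and `ac_m x = ac_m lam`. -/
def memScaledQ (p : ℕ) [Fact p.Prime] (n m : ℕ) (lam x : ℚ_[p]) : Prop :=
  (lam = 0 ∧ x = 0) ∨
  (lam ≠ 0 ∧ x ≠ 0 ∧ (n : ℤ) ∣ (x.valuation - lam.valuation) ∧ ac p m x = ac p m lam)

/-- A semi-algebraic cell `{t | α ◻₁ ord (t - c) ◻₂ β ∧ t - c ∈ lam · Q_{n,m}}`,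
where the booleans indicate whether the bounds are present. -/
def IsCell (p : ℕ) [Fact p.Prime] (X : Set ℚ_[p]) : Prop :=
  ∃ (n m : ℕ) (c lam : ℚ_[p]) (α β : ℤ) (b₁ b₂ : Bool), 1 ≤ n ∧ 1 ≤ m ∧
    X = {t : ℚ_[p] |
      (b₁ = true → t ≠ c → α < (t - c).valuation) ∧
      (b₂ = true → t ≠ c ∧ (t - c).valuation < β) ∧
      memScaledQ p n m lam (t - c)}

/-! Some cell `C` of the union contains infinitely many of the centres `a ∈ T`. Unless `C` is a
point, it contains, for its centre `c` and its level `m`, the ball of radius `ord (a - c) + m`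
around each of its points `a` (on that ball `ord` and `ac_m` of `t - c` are constant). That ball
lies in `Z` and contains `a`, so maximality forces `ord (a - c) + m ≥ δ`: infinitely many centres
lie in the single compact ball of radius `δ - m` around `c`, yet distinct centres are at distance
`> p ^ (-δ)`. -/

theorem Set.Finite.of_subset_closedBall_of_pairwise_lt_dist {X : Type*} [PseudoMetricSpace X]
    [ProperSpace X] {S : Set X} {c : X} {R r : ℝ} (hr : 0 < r) (hS : S ⊆ Metric.closedBall c R)
    (hsep : S.Pairwise fun a b => r < dist a b) : S.Finite := by
  obtain ⟨t, -, ht, hcover⟩ :=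
    finite_cover_balls_of_compact (isCompact_closedBall c R) (half_pos hr)
  have hsub : S ⊆ ⋃ x ∈ t, S ∩ Metric.ball x (r / 2) := fun a ha => by
    obtain ⟨x, hx, hax⟩ := Set.mem_iUnion₂.mp (hcover (hS ha))
    exact Set.mem_biUnion hx ⟨ha, hax⟩
  refine (ht.biUnion fun x _ => ?_).subset hsub
  refine Set.Subsingleton.finite fun a ha b hb => hsep.eq ha.1 hb.1 (not_lt.mpr ?_)
  calc dist a b ≤ dist a x + dist b x := dist_triangle_right a b x
    _ ≤ r / 2 + r / 2 := add_le_add (Metric.mem_ball.mp ha.2).le (Metric.mem_ball.mp hb.2).le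
    _ = r := add_halves r

namespace Padic

variable {p : ℕ} [Fact p.Prime]

theorem norm_le_zpow_neg_iff {x : ℚ_[p]} (hx : x ≠ 0) {γ : ℤ} :
    ‖x‖ ≤ (p : ℝ) ^ (-γ) ↔ γ ≤ x.valuation := by
  rw [Padic.norm_eq_zpow_neg_valuation hx,
    zpow_le_zpow_iff_right₀ (by exact_mod_cast (Fact.out : p.Prime).one_lt), neg_le_neg_iff]

theorem valuation_eq_of_norm_sub_lt {x y : ℚ_[p]} (hx : x ≠ 0) (h : ‖y - x‖ < ‖x‖) :
    y ≠ 0 ∧ y.valuation = x.valuation := by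
  have hnorm : ‖y‖ = ‖x‖ := by
    rw [← sub_add_cancel y x, IsUltrametricDist.norm_add_eq_max_of_norm_ne_norm h.ne,
      max_eq_right h.le]
  have hy : y ≠ 0 := norm_ne_zero_iff.mp (hnorm ▸ norm_ne_zero_iff.mpr hx)
  refine ⟨hy, ?_⟩
  rw [Padic.norm_eq_zpow_neg_valuation hy, Padic.norm_eq_zpow_neg_valuation hx] at hnorm
  exact neg_injective (zpow_right_injective₀ (by exact_mod_cast (Fact.out : p.Prime).pos)
    (by exact_mod_cast (Fact.out : p.Prime).ne_one) hnorm)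

end Padic

namespace PaperCD

variable {p : ℕ} [Fact p.Prime]

theorem pball_eq_closedBall (γ : ℤ) (a : ℚ_[p]) :
    pball p γ a = Metric.closedBall a ((p : ℝ) ^ (-γ)) := by
  ext t; simp [pball, dist_eq_norm]

theorem mem_pball_self (γ : ℤ) (a : ℚ_[p]) : a ∈ pball p γ a := by
  rw [pball_eq_closedBall]
  exact Metric.mem_closedBall_self (zpow_pos (by exact_mod_cast (Fact.out : p.Prime).pos) _).le

theorem lt_dist_of_disjoint_pball {γ : ℤ} {a b : ℚ_[p]}
    (h : Disjoint (pball p γ a) (pball p γ b)) : (p : ℝ) ^ (-γ) < dist a b :=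
  not_le.mp fun hle => Set.disjoint_left.mp h (mem_pball_self γ a)
    (by rw [pball_eq_closedBall]; exact hle)

theorem coe_unitPart {x : ℚ_[p]} (hx : x ≠ 0) :
    (unitPart p x : ℚ_[p]) = x * (p : ℚ_[p]) ^ (-x.valuation) := by
  simp [unitPart, hx]

theorem ac_eq_of_norm_sub_le (m : ℕ) {x y : ℚ_[p]} (hx : x ≠ 0) (hy : y ≠ 0)
    (hv : y.valuation = x.valuation) (h : ‖y - x‖ ≤ (p : ℝ) ^ (-(x.valuation + m))) :
    ac p m y = ac p m x := by
  have hp0 : (p : ℝ) ≠ 0 := by exact_mod_cast (Fact.out : p.Prime).ne_zero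
  rw [ac, ac, ← sub_eq_zero, ← map_sub, ← RingHom.mem_ker, PadicInt.ker_toZModPow,
    ← PadicInt.norm_le_pow_iff_mem_span_pow, PadicInt.norm_def]
  push_cast
  rw [coe_unitPart hx, coe_unitPart hy, hv, ← sub_mul, norm_mul, Padic.norm_p_zpow, neg_neg]
  calc ‖y - x‖ * (p : ℝ) ^ x.valuation
      ≤ (p : ℝ) ^ (-(x.valuation + m)) * (p : ℝ) ^ x.valuation := by gcongr
    _ = (p : ℝ) ^ (-(m : ℤ)) := by rw [← zpow_add₀ hp0]; ring_nf

end PaperCD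

section Cells

variable {p : ℕ} [Fact p.Prime]

theorem memScaledQ.ne_zero {n m : ℕ} {lam x : ℚ_[p]} (hlam : lam ≠ 0)
    (hx : memScaledQ p n m lam x) : x ≠ 0 := by
  rcases hx with ⟨hlam0, -⟩ | ⟨-, hx0, -⟩
  exacts [absurd hlam0 hlam, hx0]

theorem memScaledQ.of_norm_sub_le {n m : ℕ} {lam x y : ℚ_[p]} (hm : 1 ≤ m) (hlam : lam ≠ 0)
    (hx : memScaledQ p n m lam x) (h : ‖y - x‖ ≤ (p : ℝ) ^ (-(x.valuation + m))) :
    memScaledQ p n m lam y ∧ y.valuation = x.valuation := by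
  have hx0 := hx.ne_zero hlam
  rcases hx with ⟨hlam0, -⟩ | ⟨-, -, hdvd, hac⟩
  · exact absurd hlam0 hlam
  have hlt : ‖y - x‖ < ‖x‖ := h.trans_lt <| by
    rw [Padic.norm_eq_zpow_neg_valuation hx0]
    exact zpow_lt_zpow_right₀ (by exact_mod_cast (Fact.out : p.Prime).one_lt) (by omega)
  obtain ⟨hy0, hv⟩ := Padic.valuation_eq_of_norm_sub_lt hx0 hlt
  exact ⟨Or.inr ⟨hlam, hy0, hv ▸ hdvd, (ac_eq_of_norm_sub_le m hx0 hy0 hv h).trans hac⟩, hv⟩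

theorem IsCell.subsingleton_or_exists_pball_subset {X : Set ℚ_[p]} (hX : IsCell p X) :
    X.Subsingleton ∨
      ∃ (c : ℚ_[p]) (m : ℕ), ∀ t ∈ X, t ≠ c ∧ pball p ((t - c).valuation + m) t ⊆ X := by
  obtain ⟨n, m, c, lam, α, β, b₁, b₂, -, hm, rfl⟩ := hX
  by_cases hlam : lam = 0
  · refine Or.inl <| (Set.subsingleton_singleton (a := c)).anti fun t ht => ?_
    rcases ht.2.2 with ⟨-, h0⟩ | ⟨hl, -⟩
    exacts [sub_eq_zero.mp h0, absurd hlam hl]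
  refine Or.inr ⟨c, m, fun t ⟨h₁, h₂, hQ⟩ => ?_⟩
  have htc : t ≠ c := sub_ne_zero.mp (hQ.ne_zero hlam)
  refine ⟨htc, fun s hs => ?_⟩
  have hst : ‖(s - c) - (t - c)‖ ≤ (p : ℝ) ^ (-((t - c).valuation + m)) := by
    rw [sub_sub_sub_cancel_right]; exact hs
  obtain ⟨hQ', hv⟩ := hQ.of_norm_sub_le hm hlam hst
  have hsc : s ≠ c := sub_ne_zero.mp (hQ'.ne_zero hlam)
  exact ⟨fun hb _ => hv ▸ h₁ hb htc, fun hb => ⟨hsc, hv ▸ (h₂ hb).2⟩, hQ'⟩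

end Cells

theorem infinitely_many_maximal_balls_not_finite_union_of_cells (p : ℕ) [Fact p.Prime]
    (δ : ℤ) (T : Set ℚ_[p]) (hT : T.Infinite)
    (hdisj : T.Pairwise fun a b => Disjoint (pball p δ a) (pball p δ b))
    (Z : Set ℚ_[p]) (hZ : Z = ⋃ a ∈ T, pball p δ a)
    (hmaxml : ∀ a ∈ T, ∀ δ' : ℤ, δ' < δ → ∀ a' : ℚ_[p],
      a ∈ pball p δ' a' → ¬ pball p δ' a' ⊆ Z) :
    ¬ ∃ (k : ℕ) (C : Fin k → Set ℚ_[p]),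
        (∀ i, IsCell p (C i)) ∧ Z = ⋃ i, C i := by
  rintro ⟨k, C, hC, hZC⟩
  have hTC : T ⊆ ⋃ i, T ∩ C i := fun a ha => by
    have haZ : a ∈ Z := hZ ▸ Set.mem_biUnion ha (mem_pball_self δ a)
    obtain ⟨i, hi⟩ := Set.mem_iUnion.mp (hZC ▸ haZ)
    exact Set.mem_iUnion.mpr ⟨i, ha, hi⟩
  obtain ⟨i, hi⟩ : ∃ i, (T ∩ C i).Infinite := by
    by_contra! hfin
    exact hT ((Set.finite_iUnion hfin).subset hTC)
  rcases (hC i).subsingleton_or_exists_pball_subset with hsub | ⟨c, m, hball⟩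
  · exact hi (hsub.anti Set.inter_subset_right).finite
  refine hi (Set.Finite.of_subset_closedBall_of_pairwise_lt_dist
    (zpow_pos (by exact_mod_cast (Fact.out : p.Prime).pos) (-δ)) (c := c)
    (R := (p : ℝ) ^ (-(δ - m))) ?_ fun a ha b hb hab => lt_dist_of_disjoint_pball
      (hdisj ha.1 hb.1 hab))
  rintro a ⟨haT, haC⟩
  obtain ⟨hac, hsub⟩ := hball a haC
  have hδ : ¬ (a - c).valuation + m < δ := fun hlt =>
    hmaxml a haT _ hlt a (mem_pball_self _ a) (hsub.trans (hZC ▸ Set.subset_iUnion C i))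
  rw [Metric.mem_closedBall, dist_eq_norm, Padic.norm_le_zpow_neg_iff (sub_ne_zero.mpr hac)]
  omega
end
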